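/- Suppose a matrix-weighted network G with Laplacian L admits a gauge transformation D with division (V₁, V₂) and a vector ξ ∈ ℝ^d such that D(1_n ⊗ ξ) ∈ null(L). Then ξ lies in the null space of the weight matrix of every edge in the (V₁,V₂)-balancing set, i.e., ξ ∈ null(A_{lm}) for every edge (l,m) that is negative semi-definite within a part or positive semi-definite across the parts. -/

import Mathlib

/-!
Write `σᵢ = ±1` for the gauge signs and `qᵢⱼ = ξᵀ Aᵢⱼ ξ`. The quadratic form of `L` at
`x = D(1 ⊗ ξ)` is `∑ᵢⱼ (sᵢⱼ - σᵢσⱼ) qᵢⱼ`, and every summand is nonnegative: the sign `sᵢⱼ` of an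
edge is also the sign of `qᵢⱼ`, while `|σᵢσⱼ| = 1`. Since `x ∈ null(L)`, all summands vanish. On a
balancing edge `σₗσₘ qₗₘ ≤ 0`, which forces `qₗₘ = 0`, and semidefiniteness of `±Aₗₘ` turns this
into `Aₗₘ ξ = 0`.
-/

open Matrix

namespace Matrix

variable {ι κ R : Type*} [Fintype ι] [Fintype κ]

theorem uncurry_dotProduct_comp_mulVec [CommSemiring R] (B : Matrix ι ι (Matrix κ κ R))
    (y : ι → κ → R) :
    Function.uncurry y ⬝ᵥ comp ι ι κ κ R B *ᵥ Function.uncurry y =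
      ∑ i, ∑ j, y i ⬝ᵥ B i j *ᵥ y j := by
  simp only [dotProduct, mulVec, Fintype.sum_prod_type, comp_apply, Function.uncurry_apply_pair,
    Finset.mul_sum]
  exact Finset.sum_congr rfl fun i _ => Finset.sum_comm

end Matrix

section SignedLaplacian

variable {ι κ R : Type*} [Fintype ι] [DecidableEq ι] [CommRing R]

def signedLaplacian (s : ι → ι → R) (A : ι → ι → Matrix κ κ R) : Matrix (ι × κ) (ι × κ) R :=
  comp ι ι κ κ R (diagonal (fun i => ∑ k, s i k • A i k) - of A)

theorem signedLaplacian_eq_of_diag_eq_zero (s : ι → ι → R) (A : ι → ι → Matrix κ κ R)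
    (hA : ∀ i, A i i = 0) :
    signedLaplacian s A = of fun p q =>
      if p.1 = q.1 then (∑ k, s p.1 k • A p.1 k) p.2 q.2 else -(A p.1 q.1 p.2 q.2) := by
  ext ⟨i, a⟩ ⟨j, b⟩
  obtain rfl | hij := eq_or_ne i j
  · simp [signedLaplacian, hA]
  · simp [signedLaplacian, hij]

variable [Fintype κ]

theorem dotProduct_signedLaplacian_mulVec_gauge (s : ι → ι → R) (A : ι → ι → Matrix κ κ R)
    (σ : ι → R) (hσ : ∀ i, σ i * σ i = 1) (ξ : κ → R) :
    (fun p => σ p.1 * ξ p.2) ⬝ᵥ signedLaplacian s A *ᵥ (fun p => σ p.1 * ξ p.2) =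
      ∑ i, ∑ j, (s i j - σ i * σ j) * (ξ ⬝ᵥ A i j *ᵥ ξ) := by
  set B : Matrix ι ι (Matrix κ κ R) := diagonal (fun i => ∑ k, s i k • A i k) - of A
  have hblock : ∀ i j, (σ i • ξ) ⬝ᵥ B i j *ᵥ (σ j • ξ) =
      (if i = j then ∑ k, s i k * (ξ ⬝ᵥ A i k *ᵥ ξ) else 0) - σ i * σ j * (ξ ⬝ᵥ A i j *ᵥ ξ) := by
    intro i j
    simp only [B, Matrix.sub_apply, of_apply, sub_mulVec, dotProduct_sub, mulVec_smul,
      dotProduct_smul, smul_dotProduct, smul_eq_mul]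
    obtain rfl | hij := eq_or_ne i j
    · simp only [diagonal_apply_eq, if_true, sum_mulVec, smul_mulVec, dotProduct_sum,
        dotProduct_smul, smul_eq_mul]
      linear_combination (∑ k, s i k * (ξ ⬝ᵥ A i k *ᵥ ξ)) * hσ i
    · simp only [diagonal_apply_ne _ hij, if_neg hij, zero_mulVec, dotProduct_zero, mul_zero]
      ring
  calc _ = ∑ i, ∑ j, (σ i • ξ) ⬝ᵥ B i j *ᵥ (σ j • ξ) :=
        uncurry_dotProduct_comp_mulVec B (fun i => σ i • ξ)
    _ = _ := by
      simp only [hblock, Finset.sum_sub_distrib, Finset.sum_ite_eq, Finset.mem_univ, if_true,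
        sub_mul]

end SignedLaplacian

section Signs

variable {R : Type*} [CommRing R] [LinearOrder R] [IsStrictOrderedRing R] {s t q : R}

theorem sub_mul_nonneg_of_sign (hs : s = 1 ∧ 0 ≤ q ∨ s = -1 ∧ q ≤ 0) (ht : t = 1 ∨ t = -1) :
    0 ≤ (s - t) * q := by
  rcases hs with ⟨rfl, hq⟩ | ⟨rfl, hq⟩ <;> rcases ht with rfl | rfl <;> nlinarith

theorem eq_zero_of_sub_mul_eq_zero_of_sign (hs : s = 1 ∧ 0 ≤ q ∨ s = -1 ∧ q ≤ 0)
    (ht : t = 1 ∧ q ≤ 0 ∨ t = -1 ∧ 0 ≤ q) (h : (s - t) * q = 0) : q = 0 := by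
  rcases hs with ⟨rfl, hq⟩ | ⟨rfl, hq⟩ <;> rcases ht with ⟨rfl, hq'⟩ | ⟨rfl, hq'⟩ <;> linarith

end Signs

namespace Matrix

variable {κ : Type*} [Fintype κ] {A : Matrix κ κ ℝ}

theorem dotProduct_mulVec_nonpos_of_posSemidef_neg (hA : (-A).PosSemidef) (ξ : κ → ℝ) :
    ξ ⬝ᵥ A *ᵥ ξ ≤ 0 := by
  simpa [neg_mulVec] using hA.dotProduct_mulVec_nonneg ξ

theorem mulVec_eq_zero_of_posSemidef_neg (hA : (-A).PosSemidef) {ξ : κ → ℝ}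
    (h : ξ ⬝ᵥ A *ᵥ ξ = 0) : A *ᵥ ξ = 0 := by
  simpa [neg_mulVec] using (hA.dotProduct_mulVec_zero_iff ξ).1 (by simpa [neg_mulVec] using h)

theorem dotProduct_mulVec_sign_of_signed_posSemidef {s : ℝ}
    (h : s = 1 ∧ A.PosSemidef ∨ s = -1 ∧ (-A).PosSemidef) (ξ : κ → ℝ) :
    s = 1 ∧ 0 ≤ ξ ⬝ᵥ A *ᵥ ξ ∨ s = -1 ∧ ξ ⬝ᵥ A *ᵥ ξ ≤ 0 :=
  h.imp (And.imp_right (·.dotProduct_mulVec_nonneg ξ))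
    (And.imp_right (dotProduct_mulVec_nonpos_of_posSemidef_neg · ξ))

end Matrix

-- The gauge transformation is `D = diag (gaugeSign P) ⊗ I_d`, with `V₁ = {i | P i}`.
def gaugeSign {ι : Type*} (P : ι → Bool) (i : ι) : ℝ := if P i then 1 else -1

theorem gaugeSign_mul_gaugeSign {ι : Type*} (P : ι → Bool) (i j : ι) :
    gaugeSign P i * gaugeSign P j = if P i = P j then 1 else -1 := by
  unfold gaugeSign; cases P i <;> cases P j <;> norm_num

theorem gauge_in_nullspace_gives_null_of_balancing_set_general {n d : ℕ}
    (E : Fin n → Fin n → Prop)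
    (hEirr : ∀ i, ¬ E i i)
    (A : Fin n → Fin n → Matrix (Fin d) (Fin d) ℝ)
    (hA0 : ∀ i j, ¬ E i j → A i j = 0)
    (s : Fin n → Fin n → ℝ)
    (hs : ∀ i j, E i j →
      (s i j = 1 ∧ (A i j).PosSemidef) ∨ (s i j = -1 ∧ (-(A i j)).PosSemidef))
    (L : Matrix (Fin n × Fin d) (Fin n × Fin d) ℝ)
    (hL : L = Matrix.of fun p q =>
      if p.1 = q.1 then (∑ k, s p.1 k • A p.1 k) p.2 q.2 else -(A p.1 q.1 p.2 q.2))
    (P : Fin n → Bool) (ξ : Fin d → ℝ)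
    (hnull : L.mulVec (fun p => (if P p.1 then (1 : ℝ) else -1) * ξ p.2) = 0) :
    ∀ l m, E l m →
      ((P l = P m ∧ (-(A l m)).PosSemidef) ∨ (P l ≠ P m ∧ (A l m).PosSemidef)) →
      (A l m).mulVec ξ = 0 := by
  intro l m hE hbal
  set σ := gaugeSign P
  set q : Fin n → Fin n → ℝ := fun i j => ξ ⬝ᵥ A i j *ᵥ ξ
  have hsign : ∀ i j, E i j → s i j = 1 ∧ 0 ≤ q i j ∨ s i j = -1 ∧ q i j ≤ 0 := fun i j hE =>
    dotProduct_mulVec_sign_of_signed_posSemidef (hs i j hE) ξ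
  have hterm_nonneg : ∀ i j, 0 ≤ (s i j - σ i * σ j) * q i j := by
    intro i j
    by_cases hE : E i j
    · refine sub_mul_nonneg_of_sign (hsign i j hE) ?_
      rw [gaugeSign_mul_gaugeSign]; split_ifs <;> simp
    · simp [q, hA0 i j hE]
  have hform : ∑ i, ∑ j, (s i j - σ i * σ j) * q i j = 0 := by
    rw [← dotProduct_signedLaplacian_mulVec_gauge s A σ (by simp [σ, gaugeSign_mul_gaugeSign]),
      signedLaplacian_eq_of_diag_eq_zero s A fun i => hA0 i i (hEirr i), ← hL]
    exact (congrArg _ hnull).trans (dotProduct_zero _)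
  have hterm : (s l m - σ l * σ m) * q l m = 0 := by
    have hrows := (Fintype.sum_eq_zero_iff_of_nonneg fun i =>
      Fintype.sum_nonneg (hterm_nonneg i)).1 hform
    exact congrFun ((Fintype.sum_eq_zero_iff_of_nonneg (hterm_nonneg l)).1 (congrFun hrows l)) m
  have hq : q l m = 0 := by
    refine eq_zero_of_sub_mul_eq_zero_of_sign (hsign l m hE) ?_ hterm
    rw [gaugeSign_mul_gaugeSign]
    rcases hbal with ⟨hP, hA⟩ | ⟨hP, hA⟩
    · exact .inl ⟨if_pos hP, dotProduct_mulVec_nonpos_of_posSemidef_neg hA ξ⟩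
    · exact .inr ⟨if_neg hP, hA.dotProduct_mulVec_nonneg ξ⟩
  rcases hbal with ⟨-, hA⟩ | ⟨-, hA⟩
  · exact mulVec_eq_zero_of_posSemidef_neg hA hq
  · exact (hA.dotProduct_mulVec_zero_iff ξ).1 hq

/-- Suppose the matrix-weighted network `G` with Laplacian `L` admits a
gauge transformation `D` with division `(V₁, V₂)` (encoded by `P : Fin n → Bool`) and a
vector `ξ ∈ ℝ^d` such that `D(1_n ⊗ ξ) ∈ null(L)`.  Then `ξ` lies in the null space of
the weight matrix of every edge of the `(V₁,V₂)`-balancing set, i.e. `A_{lm} ξ = 0` for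
every edge `(l,m)` that is negative semi-definite within a part or positive
semi-definite across the parts. -/
theorem gauge_in_nullspace_gives_null_of_balancing_set {n d : ℕ}
    (E : Fin n → Fin n → Prop)
    (hEsymm : ∀ i j, E i j → E j i) (hEirr : ∀ i, ¬ E i i)
    (A : Fin n → Fin n → Matrix (Fin d) (Fin d) ℝ)
    (hAsymm : ∀ i j, A i j = A j i)
    (hA0 : ∀ i j, ¬ E i j → A i j = 0)
    (s : Fin n → Fin n → ℝ) (hssymm : ∀ i j, s i j = s j i)
    (hs : ∀ i j, E i j →
      (s i j = 1 ∧ (A i j).PosSemidef) ∨ (s i j = -1 ∧ (-(A i j)).PosSemidef))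
    (L : Matrix (Fin n × Fin d) (Fin n × Fin d) ℝ)
    (hL : L = Matrix.of fun p q =>
      if p.1 = q.1 then (∑ k, s p.1 k • A p.1 k) p.2 q.2 else -(A p.1 q.1 p.2 q.2))
    (P : Fin n → Bool) (ξ : Fin d → ℝ)
    (hnull : L.mulVec (fun p => (if P p.1 then (1 : ℝ) else -1) * ξ p.2) = 0) :
    ∀ l m, E l m →
      ((P l = P m ∧ (-(A l m)).PosSemidef) ∨ (P l ≠ P m ∧ (A l m).PosSemidef)) →
      (A l m).mulVec ξ = 0 :=
  gauge_in_nullspace_gives_null_of_balancing_set_general E hEirr A hA0 s hs L hL P ξ hnull
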